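/- arXiv:1803.02615 — 2 statements merged into one kernel-verified Lean document; each statement's English description precedes it below -/
import Mathlib

section
/- Weak duality for the knapsack problem: for every ρ ∈ {0,1}ⁿ with ∑_e v_e ρ_e ≤ V_c and every (σ, ς) ∈ S_a^+ (i.e. σ_e > 0 for all e, ς ≥ 0), one has P_u(ρ) = −∑_e c_e ρ_e ≥ P^d_u(σ, ς). -/
open Finset

/-- Weak duality for the knapsack problem: any primal feasible 0-1 vector `ρ` and any
dual feasible `(σ, ς) ∈ S_a^+` satisfy `P^d_u(σ, ς) ≤ P_u(ρ)`. -/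
theorem knapsack_weak_duality
    (n : ℕ) (c v : Fin n → ℝ) (Vc : ℝ)
    (ρ : Fin n → ℝ) (hρ : ∀ e, ρ e = 0 ∨ ρ e = 1)
    (hfeas : ∑ e, v e * ρ e ≤ Vc)
    (σ : Fin n → ℝ) (ς : ℝ)
    (hσ : ∀ e, 0 < σ e) (hς : 0 ≤ ς) :
    -(1/4) * (∑ e, (σ e + c e - ς * v e) ^ 2 / σ e) - ς * Vc ≤ -∑ e, c e * ρ e := by
  have key : ∀ e, -(1/4) * ((σ e + c e - ς * v e) ^ 2 / σ e)
      ≤ (ς * v e - c e) * ρ e := by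
    intro e
    have hs := hσ e
    rcases hρ e with h | h
    · rw [h, mul_zero]
      have : 0 ≤ (σ e + c e - ς * v e) ^ 2 / σ e := div_nonneg (sq_nonneg _) hs.le
      linarith
    · rw [h, mul_one]
      have hc : (σ e + c e - ς * v e) ^ 2 / σ e * σ e = (σ e + c e - ς * v e) ^ 2 :=
        div_mul_cancel₀ _ hs.ne'
      nlinarith [sq_nonneg (σ e + c e - ς * v e - 2 * σ e), hs]
  have hsum : -(1/4) * (∑ e, (σ e + c e - ς * v e) ^ 2 / σ e)
      ≤ ∑ e, (ς * v e - c e) * ρ e := by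
    rw [mul_sum]
    exact Finset.sum_le_sum fun e _ => key e
  have hfeas' : -(ς * Vc) ≤ -(ς * ∑ e, v e * ρ e) := by
    have := mul_le_mul_of_nonneg_left hfeas hς
    linarith
  have expand : ∑ e, (ς * v e - c e) * ρ e
      = ς * ∑ e, v e * ρ e - ∑ e, c e * ρ e := by
    rw [Finset.mul_sum, ← Finset.sum_sub_distrib]
    congr 1; ext e; ring
  linarith
end

section
/- Concavity of the canonical dual function: the function P^d_u(σ, ς) = −(1/4) ∑_e (σ_e + c_e − ς v_e)²/σ_e − ς V_c is concave on the convex set {(σ, ς) ∈ ℝⁿ × ℝ : σ_e > 0 for all e}. -/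
open Finset

lemma quad_over_lin (x y a b s t : ℝ) (ha : 0 < a) (hb : 0 < b)
    (hs : 0 ≤ s) (ht : 0 ≤ t) (hst : s + t = 1) :
    (s * x + t * y) ^ 2 / (s * a + t * b) ≤ s * (x ^ 2 / a) + t * (y ^ 2 / b) := by
  have hab : 0 < s * a + t * b := by
    rcases eq_or_lt_of_le hs with rfl | hs'
    · have : t = 1 := by linarith
      simpa [this] using by nlinarith
    · nlinarith [mul_nonneg ht hb.le]
  have h1 : s * (x ^ 2 / a) + t * (y ^ 2 / b) = (s * x ^ 2 * b + t * y ^ 2 * a) / (a * b) := by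
    field_simp
  rw [h1, div_le_div_iff₀ hab (mul_pos ha hb)]
  nlinarith [mul_nonneg (mul_nonneg hs ht) (sq_nonneg (x * b - y * a))]

/-- Concavity of the canonical dual function on the set where all components of σ are
positive. -/
theorem canonical_dual_concave
    (n : ℕ) (c v : Fin n → ℝ) (Vc : ℝ) :
    ConcaveOn ℝ {p : (Fin n → ℝ) × ℝ | ∀ e, 0 < p.1 e}
      (fun p => -(1/4) * (∑ e, (p.1 e + c e - p.2 * v e) ^ 2 / p.1 e) - p.2 * Vc) := by
  constructor
  · intro p hp q hq s t hs ht hst e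
    simp only [Prod.fst_add, Prod.smul_fst, Pi.add_apply, Pi.smul_apply, smul_eq_mul]
    rcases eq_or_lt_of_le hs with rfl | hs'
    · have : t = 1 := by linarith
      simpa [this] using hq e
    · nlinarith [hp e, hq e, mul_nonneg ht (hq e).le]
  · intro p hp q hq s t hs ht hst
    simp only [Prod.fst_add, Prod.snd_add, Prod.smul_fst, Prod.smul_snd, Pi.add_apply,
      Pi.smul_apply, smul_eq_mul]
    have hsum : ∑ e, (s * p.1 e + t * q.1 e + c e - (s * p.2 + t * q.2) * v e) ^ 2 /
        (s * p.1 e + t * q.1 e)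
        ≤ s * ∑ e, (p.1 e + c e - p.2 * v e) ^ 2 / p.1 e
          + t * ∑ e, (q.1 e + c e - q.2 * v e) ^ 2 / q.1 e := by
      rw [Finset.mul_sum, Finset.mul_sum, ← Finset.sum_add_distrib]
      refine Finset.sum_le_sum fun e _ => ?_
      have harg : s * p.1 e + t * q.1 e + c e - (s * p.2 + t * q.2) * v e
          = s * (p.1 e + c e - p.2 * v e) + t * (q.1 e + c e - q.2 * v e) := by
        linear_combination (-(c e)) * hst
      rw [harg]
      exact quad_over_lin _ _ _ _ _ _ (hp e) (hq e) hs ht hst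
    nlinarith [hsum]
end
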